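/- Let S₃ = {e, c, c², t, tc, tc²} be the symmetric group on three letters (c³ = t² = e, t·c·t = c²), let A be the ℂ-vector space with basis {F^{(h,g)} : h,g ∈ S₃}, and let Δ : A → A ⊗ A be the linear map with Δ(F^{(h,g)}) = Σ_{k∈S₃} F^{(h,k)} ⊗ F^{(k⁻¹·h·k, k⁻¹·g)}. Let ω := e^{2πi/3} and define the 2×2 matrix M over A by M₁₁ := (1/3)(F^{(e,e)} + ω̄·F^{(e,c)} + ω·F^{(e,c²)}), M₁₂ := (1/3)(F^{(e,t)} + ω·F^{(e,tc)} + ω̄·F^{(e,tc²)}), M₂₁ := (1/3)(F^{(e,t)} + ω̄·F^{(e,tc)} + ω·F^{(e,tc²)}), M₂₂ := (1/3)(F^{(e,e)} + ω·F^{(e,c)} + ω̄·F^{(e,c²)}). Then for all i,j ∈ {1,2}: Δ(M_{ij}) = 3 · Σ_{k=1}^{2} M_{ik} ⊗ M_{kj}. -/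
import Mathlib


open scoped TensorProduct

/-- The symmetric group `S₃` on three letters. -/
abbrev S3 : Type := Equiv.Perm (Fin 3)

/-- The three-cycle `c` of `S₃` (`c³ = e`). -/
def cElt : S3 := finRotate 3

/-- The transposition `t` of `S₃` (`t² = e`, `t·c·t = c²`). -/
def tElt : S3 := Equiv.swap 0 1

/-- The vector space `A` with basis `{F^{(h,g)} : h,g ∈ S₃}` of ribbon operators
of the `S₃` quantum double; `ribbonF h g` is the basis vector `F^{(h,g)}`. -/
noncomputable def ribbonF (h g : S3) : (S3 × S3) →₀ ℂ :=
  Finsupp.single (h, g) 1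

/-- `ω := e^{2πi/3}`. -/
noncomputable def omega : ℂ := Complex.exp (2 * Real.pi * Complex.I / 3)

/-- The matrix `M` of ribbon operators of the pure-charge anyon `C = ([e], π)` of
the `S₃` quantum double. -/
noncomputable def ribbonC : Matrix (Fin 2) (Fin 2) ((S3 × S3) →₀ ℂ) :=
  !![(1 / 3 : ℂ) • (ribbonF 1 1 + (starRingEnd ℂ) omega • ribbonF 1 cElt +
        omega • ribbonF 1 (cElt ^ 2)),
     (1 / 3 : ℂ) • (ribbonF 1 tElt + omega • ribbonF 1 (tElt * cElt) +
        (starRingEnd ℂ) omega • ribbonF 1 (tElt * cElt ^ 2));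
     (1 / 3 : ℂ) • (ribbonF 1 tElt + (starRingEnd ℂ) omega • ribbonF 1 (tElt * cElt) +
        omega • ribbonF 1 (tElt * cElt ^ 2)),
     (1 / 3 : ℂ) • (ribbonF 1 1 + omega • ribbonF 1 cElt +
        (starRingEnd ℂ) omega • ribbonF 1 (cElt ^ 2))]

lemma mt0 : ((1:S3)) * ((1:S3)) = (1:S3) := by decide
lemma mt1 : ((1:S3)) * (cElt) = cElt := by decide
lemma mt2 : ((1:S3)) * (cElt^2) = cElt^2 := by decide
lemma mt3 : ((1:S3)) * (tElt) = tElt := by decide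
lemma mt4 : ((1:S3)) * (tElt*cElt) = tElt*cElt := by decide
lemma mt5 : ((1:S3)) * (tElt*cElt^2) = tElt*cElt^2 := by decide
lemma mt6 : (cElt) * ((1:S3)) = cElt := by decide
lemma mt7 : (cElt) * (cElt) = cElt^2 := by decide
lemma mt8 : (cElt) * (cElt^2) = (1:S3) := by decide
lemma mt9 : (cElt) * (tElt) = tElt*cElt^2 := by decide
lemma mt10 : (cElt) * (tElt*cElt) = tElt := by decide
lemma mt11 : (cElt) * (tElt*cElt^2) = tElt*cElt := by decide
lemma mt12 : (cElt^2) * ((1:S3)) = cElt^2 := by decide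
lemma mt13 : (cElt^2) * (cElt) = (1:S3) := by decide
lemma mt14 : (cElt^2) * (cElt^2) = cElt := by decide
lemma mt15 : (cElt^2) * (tElt) = tElt*cElt := by decide
lemma mt16 : (cElt^2) * (tElt*cElt) = tElt*cElt^2 := by decide
lemma mt17 : (cElt^2) * (tElt*cElt^2) = tElt := by decide
lemma mt18 : (tElt) * ((1:S3)) = tElt := by decide
lemma mt19 : (tElt) * (cElt) = tElt*cElt := by decide
lemma mt20 : (tElt) * (cElt^2) = tElt*cElt^2 := by decide
lemma mt21 : (tElt) * (tElt) = (1:S3) := by decide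
lemma mt22 : (tElt) * (tElt*cElt) = cElt := by decide
lemma mt23 : (tElt) * (tElt*cElt^2) = cElt^2 := by decide
lemma mt24 : (tElt*cElt) * ((1:S3)) = tElt*cElt := by decide
lemma mt25 : (tElt*cElt) * (cElt) = tElt*cElt^2 := by decide
lemma mt26 : (tElt*cElt) * (cElt^2) = tElt := by decide
lemma mt27 : (tElt*cElt) * (tElt) = cElt^2 := by decide
lemma mt28 : (tElt*cElt) * (tElt*cElt) = (1:S3) := by decide
lemma mt29 : (tElt*cElt) * (tElt*cElt^2) = cElt := by decide
lemma mt30 : (tElt*cElt^2) * ((1:S3)) = tElt*cElt^2 := by decide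
lemma mt31 : (tElt*cElt^2) * (cElt) = tElt := by decide
lemma mt32 : (tElt*cElt^2) * (cElt^2) = tElt*cElt := by decide
lemma mt33 : (tElt*cElt^2) * (tElt) = cElt := by decide
lemma mt34 : (tElt*cElt^2) * (tElt*cElt) = cElt^2 := by decide
lemma mt35 : (tElt*cElt^2) * (tElt*cElt^2) = (1:S3) := by decide
lemma inv_0 : ((1:S3))⁻¹ = (1:S3) := by decide
lemma inv_1 : (cElt)⁻¹ = cElt^2 := by decide
lemma inv_2 : (cElt^2)⁻¹ = cElt := by decide
lemma inv_3 : (tElt)⁻¹ = tElt := by decide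
lemma inv_4 : (tElt*cElt)⁻¹ = tElt*cElt := by decide
lemma inv_5 : (tElt*cElt^2)⁻¹ = tElt*cElt^2 := by decide

lemma S3sum {M : Type*} [AddCommMonoid M] (f : S3 → M) :
    ∑ k : S3, f k =
      f 1 + f cElt + f (cElt^2) + f tElt + f (tElt*cElt) + f (tElt*cElt^2) := by
  have h : (Finset.univ : Finset S3) = {1, cElt, cElt^2, tElt, tElt*cElt, tElt*cElt^2} := by
    decide
  rw [h, Finset.sum_insert (by decide), Finset.sum_insert (by decide),
      Finset.sum_insert (by decide), Finset.sum_insert (by decide),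
      Finset.sum_insert (by decide), Finset.sum_singleton]
  abel

lemma omega_pow_three : omega ^ 3 = 1 := by
  have h : ((3:ℕ):ℂ) * (2 * Real.pi * Complex.I / 3) = 2 * Real.pi * Complex.I := by
    push_cast; ring
  rw [omega, ← Complex.exp_nat_mul, h, Complex.exp_two_pi_mul_I]

lemma omega_mul_conj : omega * (starRingEnd ℂ) omega = 1 := by
  rw [omega, ← Complex.exp_conj, ← Complex.exp_add]
  have h : 2 * (Real.pi:ℂ) * Complex.I / 3 +
      (starRingEnd ℂ) (2 * (Real.pi:ℂ) * Complex.I / 3) = 0 := by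
    simp only [map_div₀, map_mul, Complex.conj_I, Complex.conj_ofReal, map_ofNat]
    ring
  rw [h, Complex.exp_zero]

lemma omega_conj_eq : (starRingEnd ℂ) omega = omega ^ 2 := by
  calc (starRingEnd ℂ) omega = (starRingEnd ℂ) omega * omega ^ 3 := by
        rw [omega_pow_three, mul_one]
    _ = (omega * (starRingEnd ℂ) omega) * omega ^ 2 := by ring
    _ = omega ^ 2 := by rw [omega_mul_conj, one_mul]

set_option maxHeartbeats 4000000 in
/-- under the comultiplication
`Δ(F^{(h,g)}) = Σ_{k∈S₃} F^{(h,k)} ⊗ F^{(k⁻¹hk, k⁻¹g)}`, the ribbon-operator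
matrix `M` of the anyon `C` satisfies `Δ(M_{ij}) = 3·Σ_k M_{ik} ⊗ M_{kj}`. -/
theorem ribbonC_comultiplication
    (Δ : ((S3 × S3) →₀ ℂ) →ₗ[ℂ] ((S3 × S3) →₀ ℂ) ⊗[ℂ] ((S3 × S3) →₀ ℂ))
    (hΔ : ∀ h g : S3, Δ (ribbonF h g) =
      ∑ k : S3, ribbonF h k ⊗ₜ[ℂ] ribbonF (k⁻¹ * h * k) (k⁻¹ * g)) :
    ∀ i j : Fin 2,
      Δ (ribbonC i j) = (3 : ℂ) • ∑ k : Fin 2, ribbonC i k ⊗ₜ[ℂ] ribbonC k j := by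
  intro i j
  have h3 := omega_pow_three
  fin_cases i <;> fin_cases j <;>
  · simp only [ribbonC, Fin.zero_eta, Fin.mk_one, Matrix.of_apply, Fin.isValue, Fin.sum_univ_two, Matrix.cons_val', Matrix.cons_val_zero,
      Matrix.empty_val', Matrix.cons_val_fin_one, Matrix.cons_val_one, Matrix.head_cons,
      Matrix.head_fin_const]
    rw [omega_conj_eq]
    simp only [map_add, map_smul, hΔ, S3sum, mul_one, one_mul, inv_one,
      inv_0, inv_1, inv_2, inv_3, inv_4, inv_5,
      mt7, mt8, mt9, mt10, mt11, mt13, mt14, mt15, mt16, mt17,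
      mt19, mt20, mt21, mt22, mt23, mt25, mt26, mt27, mt28, mt29,
      mt31, mt32, mt33, mt34, mt35]
    simp only [TensorProduct.tmul_add, TensorProduct.add_tmul, ← TensorProduct.smul_tmul',
      TensorProduct.tmul_smul, smul_add, smul_smul]
    match_scalars <;>
      first
        | ring1
        | linear_combination (1/3 : ℂ) * h3
        | linear_combination (-1/3 : ℂ) * h3
        | linear_combination (omega/3) * h3
        | linear_combination (-omega/3) * h3
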